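/- arXiv:2006.09352 — 5 statements merged into one kernel-verified Lean document; each statement's English description precedes it below -/
import Mathlib

section
/- Fix a dimension d, positive integers R and W, a privacy budget ε > 0, and arbitrary hash functions l_1, …, l_R : ℝ^d → Fin W. For a finite multiset D of points in ℝ^d, define the count matrix C(D) ∈ ℝ^{Fin R × Fin W} by C(D)(r,w) = the number of elements x of D (with multiplicity) such that l_r(x) = w, and define the randomized sketch mechanism A(D) as the measure on ℝ^{Fin R × Fin W} with density z ↦ ∏_{r,w} (ε/(2R))·exp(−(ε/R)·|z(r,w) − C(D)(r,w)|) with respect to Lebesgue measure. Then for every finite multiset D, every point x₀ ∈ ℝ^d, and every measurable set S ⊆ ℝ^{Fin R × Fin W}, writing D' for the multiset D with x₀ added, one has A(D)(S) ≤ exp(ε)·A(D')(S) and A(D')(S) ≤ exp(ε)·A(D)(S). (This is the ε-differential privacy of the RACE sketch, Theorem 3.) -/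
open MeasureTheory

lemma race_prod_le {N : Type*} [Fintype N] (c a t : ℝ) (hc : 0 ≤ c) (ha : 0 ≤ a)
    (u v z : N → ℝ) (hsum : ∑ p, |u p - v p| ≤ t) :
    ∏ p, c * Real.exp (-a * |z p - u p|) ≤
      Real.exp (a * t) * ∏ p, c * Real.exp (-a * |z p - v p|) := by
  rw [Finset.prod_mul_distrib, Finset.prod_mul_distrib, ← Real.exp_sum, ← Real.exp_sum,
    Finset.prod_const, ← mul_assoc, mul_comm (Real.exp (a * t)), mul_assoc, ← Real.exp_add]
  apply mul_le_mul_of_nonneg_left _ (pow_nonneg hc _)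
  apply Real.exp_le_exp.2
  have h1 : ∑ p, -a * |z p - u p| = -a * ∑ p, |z p - u p| := by
    rw [Finset.mul_sum]
  have h2 : ∑ p, -a * |z p - v p| = -a * ∑ p, |z p - v p| := by
    rw [Finset.mul_sum]
  rw [h1, h2]
  have tri : ∑ p, |z p - v p| ≤ ∑ p, |z p - u p| + t := by
    calc ∑ p, |z p - v p| ≤ ∑ p, (|z p - u p| + |u p - v p|) := by
          apply Finset.sum_le_sum
          intro p _
          have h3 : |z p - v p| ≤ |z p - u p| + |(z p - v p) - (z p - u p)| := by
            nlinarith [abs_sub_abs_le_abs_sub (z p - v p) (z p - u p)]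
          have h4 : (z p - v p) - (z p - u p) = u p - v p := by ring
          rw [h4] at h3
          exact h3
      _ = ∑ p, |z p - u p| + ∑ p, |u p - v p| := by rw [Finset.sum_add_distrib]
      _ ≤ ∑ p, |z p - u p| + t := by linarith
  nlinarith [mul_le_mul_of_nonneg_left tri ha]

/-- **ε-differential privacy of the RACE sketch (Theorem 3).**
The mechanism adding i.i.d. Laplace noise of scale `R/ε` to every counter of the
RACE count matrix satisfies `ε`-differential privacy with respect to adding a
single element to the dataset. -/
theorem race_sketch_eps_dp (d R W : ℕ) (hR : 0 < R) (hW : 0 < W)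
    (ε : ℝ) (hε : 0 < ε) (l : Fin R → (Fin d → ℝ) → Fin W)
    (C : Multiset (Fin d → ℝ) → Fin R × Fin W → ℝ)
    (hC : ∀ D p, C D p = ((D.filter (fun x => l p.1 x = p.2)).card : ℝ))
    (A : Multiset (Fin d → ℝ) → Measure (Fin R × Fin W → ℝ))
    (hA : ∀ D, A D = volume.withDensity (fun z => ENNReal.ofReal
      (∏ p : Fin R × Fin W, (ε / (2 * R)) * Real.exp (-(ε / R) * |z p - C D p|)))) :
    ∀ (D : Multiset (Fin d → ℝ)) (x₀ : Fin d → ℝ) (S : Set (Fin R × Fin W → ℝ)),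
      MeasurableSet S →
        A D S ≤ ENNReal.ofReal (Real.exp ε) * A (x₀ ::ₘ D) S ∧
        A (x₀ ::ₘ D) S ≤ ENNReal.ofReal (Real.exp ε) * A D S := by
  intro D x₀ S hS
  have hRpos : (0 : ℝ) < R := by exact_mod_cast hR
  have ha : (0 : ℝ) ≤ ε / R := le_of_lt (div_pos hε hRpos)
  have hc : (0 : ℝ) ≤ ε / (2 * R) := le_of_lt (div_pos hε (by linarith))
  -- the count difference
  have hdiff : ∀ p : Fin R × Fin W,
      |C D p - C (x₀ ::ₘ D) p| = if l p.1 x₀ = p.2 then 1 else 0 := by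
    intro p
    rw [hC, hC, Multiset.filter_cons]
    by_cases h : l p.1 x₀ = p.2
    · simp [h, abs_sub_comm]
    · simp [h]
  have hsum : ∑ p : Fin R × Fin W, |C D p - C (x₀ ::ₘ D) p| = (R : ℝ) := by
    simp only [hdiff]
    rw [Fintype.sum_prod_type]
    have : ∀ r : Fin R, (∑ w : Fin W, if l r x₀ = w then (1 : ℝ) else 0) = 1 := by
      intro r
      rw [Finset.sum_ite_eq]
      simp
    simp [this]
  have hsum' : ∑ p : Fin R × Fin W, |C (x₀ ::ₘ D) p - C D p| = (R : ℝ) := by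
    rw [← hsum]
    congr 1
    ext p
    rw [abs_sub_comm]
  have haR : (ε / R) * (R : ℝ) = ε := by field_simp
  -- pointwise bounds
  have key : ∀ (u v : Fin R × Fin W → ℝ),
      (∑ p, |u p - v p| ≤ (R : ℝ)) →
      ∀ z : Fin R × Fin W → ℝ,
      ENNReal.ofReal (∏ p : Fin R × Fin W, (ε / (2 * R)) * Real.exp (-(ε / R) * |z p - u p|)) ≤
      ENNReal.ofReal (Real.exp ε) *
        ENNReal.ofReal (∏ p : Fin R × Fin W, (ε / (2 * R)) * Real.exp (-(ε / R) * |z p - v p|)) := by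
    intro u v hsumuv z
    rw [← ENNReal.ofReal_mul (Real.exp_nonneg ε)]
    apply ENNReal.ofReal_le_ofReal
    have := race_prod_le (ε / (2 * R)) (ε / R) (R : ℝ) hc ha u v z hsumuv
    rwa [haR] at this
  constructor
  · rw [hA, hA, withDensity_apply _ hS, withDensity_apply _ hS, ← lintegral_const_mul' _ _
      (by exact ENNReal.ofReal_ne_top)]
    exact lintegral_mono fun z => key (C D) (C (x₀ ::ₘ D)) (le_of_eq hsum) z
  · rw [hA, hA, withDensity_apply _ hS, withDensity_apply _ hS, ← lintegral_const_mul' _ _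
      (by exact ENNReal.ofReal_ne_top)]
    exact lintegral_mono fun z => key (C (x₀ ::ₘ D)) (C D) (le_of_eq hsum') z
end

section
/- Let d be a positive integer, Δ > 0, ε > 0, and let μ, ν ∈ ℝ^d satisfy ∑_{i=1}^d |μ_i − ν_i| ≤ Δ. Let P (respectively Q) be the measure on ℝ^d with density z ↦ ∏_{i=1}^d (ε/(2Δ))·exp(−(ε/Δ)·|z_i − μ_i|) (respectively with μ replaced by ν) with respect to Lebesgue measure. Then for every measurable set S ⊆ ℝ^d, P(S) ≤ exp(ε)·Q(S). (The Laplace mechanism.) -/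
open MeasureTheory

/-- **The Laplace mechanism.** Adding i.i.d. Laplace noise of scale `Δ/ε`
coordinatewise to two centers at L1 distance at most `Δ` yields output
distributions satisfying the `ε`-DP likelihood-ratio inequality. -/
theorem laplace_mechanism (d : ℕ) (hd : 0 < d) (Δ ε : ℝ) (hΔ : 0 < Δ) (hε : 0 < ε)
    (μ ν : Fin d → ℝ) (h : ∑ i, |μ i - ν i| ≤ Δ)
    (P Q : Measure (Fin d → ℝ))
    (hP : P = volume.withDensity (fun z => ENNReal.ofReal
      (∏ i, (ε / (2 * Δ)) * Real.exp (-(ε / Δ) * |z i - μ i|))))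
    (hQ : Q = volume.withDensity (fun z => ENNReal.ofReal
      (∏ i, (ε / (2 * Δ)) * Real.exp (-(ε / Δ) * |z i - ν i|)))) :
    ∀ S : Set (Fin d → ℝ), MeasurableSet S →
      P S ≤ ENNReal.ofReal (Real.exp ε) * Q S := by
  intro S hS
  subst hP hQ
  rw [withDensity_apply _ hS, withDensity_apply _ hS, ← lintegral_const_mul']
  · apply lintegral_mono
    intro z
    dsimp only
    rw [← ENNReal.ofReal_mul (Real.exp_nonneg ε)]
    apply ENNReal.ofReal_le_ofReal
    have hc : (0:ℝ) ≤ ε / (2 * Δ) := by positivity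
    rw [Finset.prod_mul_distrib, Finset.prod_mul_distrib, ← Real.exp_sum, ← Real.exp_sum,
      Finset.prod_const]
    rw [mul_comm (Real.exp ε), mul_assoc, ← Real.exp_add]
    apply mul_le_mul_of_nonneg_left _ (by positivity)
    apply Real.exp_le_exp.mpr
    have key : ∑ i, -(ε / Δ) * |z i - μ i| - ∑ i, -(ε / Δ) * |z i - ν i| ≤ ε := by
      rw [← Finset.sum_sub_distrib]
      have : ∀ i ∈ Finset.univ, -(ε / Δ) * |z i - μ i| - -(ε / Δ) * |z i - ν i|
          ≤ (ε / Δ) * |μ i - ν i| := by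
        intro i _
        have habs : |z i - ν i| - |z i - μ i| ≤ |μ i - ν i| := by
          have := abs_sub_abs_le_abs_sub (z i - ν i) (z i - μ i)
          have h2 : z i - ν i - (z i - μ i) = μ i - ν i := by ring
          rw [h2] at this
          exact this
        have hk : (0:ℝ) ≤ ε / Δ := by positivity
        nlinarith [mul_le_mul_of_nonneg_left habs hk]
      calc ∑ i, (-(ε / Δ) * |z i - μ i| - -(ε / Δ) * |z i - ν i|)
          ≤ ∑ i, (ε / Δ) * |μ i - ν i| := Finset.sum_le_sum this
        _ = (ε / Δ) * ∑ i, |μ i - ν i| := by rw [Finset.mul_sum]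
        _ ≤ (ε / Δ) * Δ := by
            apply mul_le_mul_of_nonneg_left h (by positivity)
        _ = ε := by field_simp
    linarith
  · exact ENNReal.ofReal_ne_top
end

section
/- Let n be a positive integer, and for each i = 1, …, n let P_i and Q_i be probability measures (more generally, σ-finite measures) on a measurable space X_i and ε_i ≥ 0 be such that P_i(S) ≤ exp(ε_i)·Q_i(S) for every measurable set S ⊆ X_i. Then the product measures on X_1 × ⋯ × X_n satisfy (P_1 ⊗ ⋯ ⊗ P_n)(S) ≤ exp(ε_1 + ⋯ + ε_n)·(Q_1 ⊗ ⋯ ⊗ Q_n)(S) for every measurable set S of the product space. (Sequential composition of independent differentially private mechanisms.) -/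
open MeasureTheory Set NNReal ENNReal

/-- Monotonicity of `OuterMeasure.pi`. -/
lemma outer_pi_mono {ι : Type*} [Fintype ι] {α : ι → Type*}
    (m₁ m₂ : ∀ i, MeasureTheory.OuterMeasure (α i)) (h : ∀ i s, m₁ i s ≤ m₂ i s) :
    MeasureTheory.OuterMeasure.pi m₁ ≤ MeasureTheory.OuterMeasure.pi m₂ := by
  intro s
  rw [MeasureTheory.OuterMeasure.pi, MeasureTheory.OuterMeasure.pi,
    MeasureTheory.OuterMeasure.boundedBy_apply, MeasureTheory.OuterMeasure.boundedBy_apply]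
  gcongr with t ht k
  unfold MeasureTheory.piPremeasure
  gcongr
  exact fun s => h _ s

/-- Monotonicity of the product measure. -/
lemma measure_pi_mono {ι : Type*} [Fintype ι] {α : ι → Type*} [∀ i, MeasurableSpace (α i)]
    (μ ν : ∀ i, Measure (α i)) (h : ∀ i, μ i ≤ ν i) :
    Measure.pi μ ≤ Measure.pi ν := by
  rw [Measure.le_iff]
  intro s hs
  rw [Measure.pi_def, Measure.pi_def, toMeasure_apply _ _ hs, toMeasure_apply _ _ hs]
  exact outer_pi_mono _ _ (fun i s => by exact h i s) s

/-- **Sequential composition of independent differentially private mechanisms.**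
If `P i S ≤ exp (ε i) * Q i S` for all measurable `S` and each `i`, then the
product measures satisfy the likelihood-ratio inequality with budget `∑ i, ε i`. -/
theorem sequential_composition (n : ℕ) (hn : 0 < n)
    (X : Fin n → Type*) [∀ i, MeasurableSpace (X i)]
    (P Q : ∀ i, Measure (X i)) [∀ i, SigmaFinite (P i)] [∀ i, SigmaFinite (Q i)]
    (ε : Fin n → ℝ) (hε : ∀ i, 0 ≤ ε i)
    (h : ∀ i, ∀ S : Set (X i), MeasurableSet S →
      P i S ≤ ENNReal.ofReal (Real.exp (ε i)) * Q i S) :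
    ∀ S : Set (∀ i, X i), MeasurableSet S →
      Measure.pi P S ≤ ENNReal.ofReal (Real.exp (∑ i, ε i)) * Measure.pi Q S := by
  intro S hS
  set c : Fin n → ℝ≥0 := fun i => (Real.exp (ε i)).toNNReal with hc
  have hco : ∀ i, (ENNReal.ofReal (Real.exp (ε i))) = (c i : ℝ≥0∞) := fun i => rfl
  have hle : ∀ i, P i ≤ c i • Q i := by
    intro i
    rw [Measure.le_iff]
    intro s hs
    have := h i s hs
    simpa only [Measure.smul_apply, ENNReal.smul_def, smul_eq_mul, hco] using this
  have key : Measure.pi (fun i => c i • Q i)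
      = (∏ i, (c i : ℝ≥0∞)) • Measure.pi Q := by
    refine Measure.pi_eq fun s hs => ?_
    simp only [Measure.smul_apply, Measure.pi_pi, Finset.prod_mul_distrib, ENNReal.smul_def, smul_eq_mul]
  calc Measure.pi P S ≤ Measure.pi (fun i => c i • Q i) S :=
        measure_pi_mono _ _ hle S
    _ = (∏ i, (c i : ℝ≥0∞)) * Measure.pi Q S := by rw [key]; rfl
    _ = ENNReal.ofReal (Real.exp (∑ i, ε i)) * Measure.pi Q S := by
        rw [Real.exp_sum, ENNReal.ofReal_prod_of_nonneg (fun i _ => (Real.exp_pos _).le)]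
        simp [hco]
end

section
/- Let (Ω, P) be a probability space, let I be a finite index set, and for each x ∈ I let B_x : Ω → ℝ be a random variable taking values in {0,1} with E[B_x] = k_x (no independence is assumed). Let X = ∑_{x ∈ I} B_x. Then E[X] = ∑_{x ∈ I} k_x, and Var(X) ≤ (∑_{x ∈ I} √(k_x))². (Unbiasedness and variance bound for the RACE estimator, Theorem 2, where B_x is the indicator that the query collides with data point x under a random LSH function with collision probability k_x.) -/
open MeasureTheory ProbabilityTheory

/-- **Unbiasedness and variance bound for the RACE estimator (Theorem 2).**
If `B x` are `{0,1}`-valued random variables (not necessarily independent) with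
means `k x`, then `X = ∑ x, B x` has mean `∑ x, k x` and variance at most
`(∑ x, √(k x))²`. -/
theorem race_estimator_mean_variance {Ω : Type*} [MeasurableSpace Ω]
    (P : Measure Ω) [IsProbabilityMeasure P]
    {ι : Type*} [Fintype ι] (B : ι → Ω → ℝ) (k : ι → ℝ)
    (hmeas : ∀ x, Measurable (B x))
    (h01 : ∀ x ω, B x ω = 0 ∨ B x ω = 1)
    (hmean : ∀ x, ∫ ω, B x ω ∂P = k x) :
    (∫ ω, (∑ x, B x ω) ∂P) = ∑ x, k x ∧
    variance (fun ω => ∑ x, B x ω) P ≤ (∑ x, Real.sqrt (k x)) ^ 2 := by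
  have hnn : ∀ x ω, 0 ≤ B x ω := fun x ω => by rcases h01 x ω with h | h <;> simp [h]
  have hle1 : ∀ x ω, B x ω ≤ 1 := fun x ω => by rcases h01 x ω with h | h <;> simp [h]
  have hint : ∀ x, Integrable (B x) P := fun x =>
    (integrable_const (1 : ℝ)).mono' (hmeas x).aestronglyMeasurable
      (ae_of_all _ fun ω => by
        rw [Real.norm_of_nonneg (hnn x ω)]; exact hle1 x ω)
  have hknn : ∀ x, 0 ≤ k x := fun x => by
    rw [← hmean x]; exact integral_nonneg (hnn x)
  have hmean' : (∫ ω, (∑ x, B x ω) ∂P) = ∑ x, k x := by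
    rw [integral_finset_sum _ fun x _ => hint x]
    exact Finset.sum_congr rfl fun x _ => hmean x
  refine ⟨hmean', ?_⟩
  -- product integrability
  have hintp : ∀ x y, Integrable (fun ω => B x ω * B y ω) P := fun x y =>
    (integrable_const (1 : ℝ)).mono' ((hmeas x).mul (hmeas y)).aestronglyMeasurable
      (ae_of_all _ fun ω => by
        rw [Real.norm_of_nonneg (mul_nonneg (hnn x ω) (hnn y ω))]
        exact mul_le_one₀ (hle1 x ω) (hnn y ω) (hle1 y ω))
  -- E[B x * B y] ≤ √(k x) * √(k y)
  have key : ∀ x y, (∫ ω, B x ω * B y ω ∂P) ≤ Real.sqrt (k x) * Real.sqrt (k y) := by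
    intro x y
    have h1 : (∫ ω, B x ω * B y ω ∂P) ≤ k x := by
      rw [← hmean x]
      refine integral_mono (hintp x y) (hint x) fun ω => ?_
      calc B x ω * B y ω ≤ B x ω * 1 := by
            exact mul_le_mul_of_nonneg_left (hle1 y ω) (hnn x ω)
        _ = B x ω := mul_one _
    have h2 : (∫ ω, B x ω * B y ω ∂P) ≤ k y := by
      rw [← hmean y]
      refine integral_mono (hintp x y) (hint y) fun ω => ?_
      calc B x ω * B y ω ≤ 1 * B y ω := by
            exact mul_le_mul_of_nonneg_right (hle1 x ω) (hnn y ω)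
        _ = B y ω := one_mul _
    have hI : 0 ≤ ∫ ω, B x ω * B y ω ∂P :=
      integral_nonneg fun ω => mul_nonneg (hnn x ω) (hnn y ω)
    rw [← Real.sqrt_mul_self hI]
    rw [← Real.sqrt_mul (hknn x)]
    exact Real.sqrt_le_sqrt (mul_le_mul h1 h2 hI (hknn x))
  have hvar := variance_le_expectation_sq (μ := P)
    (X := fun ω => ∑ x, B x ω)
    (Finset.aestronglyMeasurable_fun_sum _ fun x _ => (hmeas x).aestronglyMeasurable)
  refine hvar.trans ?_
  have hsq : (fun ω => ∑ x, B x ω) ^ 2 = fun ω => ∑ x, ∑ y, B x ω * B y ω := by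
    funext ω
    simp [pow_two, Finset.sum_mul_sum]
  rw [hsq]
  rw [integral_finset_sum _ fun x _ => integrable_finset_sum _ fun y _ => hintp x y]
  calc ∑ x, ∫ ω, ∑ y, B x ω * B y ω ∂P
      = ∑ x, ∑ y, ∫ ω, B x ω * B y ω ∂P := by
        exact Finset.sum_congr rfl fun x _ =>
          integral_finset_sum _ fun y _ => hintp x y
    _ ≤ ∑ x, ∑ y, Real.sqrt (k x) * Real.sqrt (k y) := by
        exact Finset.sum_le_sum fun x _ => Finset.sum_le_sum fun y _ => key x y
    _ = (∑ x, Real.sqrt (k x)) ^ 2 := by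
        rw [pow_two, Finset.sum_mul_sum]
end

section
/- Let (Ω, P) be a probability space, let S be a set, let T be a type with decidable equality, and let L : Ω → (S → T) be a random function such that for all x, y ∈ S the event {ω : L(ω)(x) = L(ω)(y)} is measurable. Define k(x,y) = P({ω : L(ω)(x) = L(ω)(y)}). Then k is a positive semidefinite kernel: for every finite list of points x_1, …, x_n ∈ S and every c_1, …, c_n ∈ ℝ, ∑_{i=1}^n ∑_{j=1}^n c_i·c_j·k(x_i, x_j) ≥ 0. (The collision probability of a random hash family is a positive semidefinite kernel.) -/
open MeasureTheory

lemma gram_ind_nonneg {n : ℕ} {T : Type*} [DecidableEq T] (V : Fin n → T) (c : Fin n → ℝ) :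
    0 ≤ ∑ i : Fin n, ∑ j : Fin n, c i * c j * (if V i = V j then (1:ℝ) else 0) := by
  have key : ∑ i : Fin n, ∑ j : Fin n, c i * c j * (if V i = V j then (1:ℝ) else 0)
      = ∑ t ∈ Finset.image V Finset.univ,
          (∑ i ∈ Finset.univ.filter (fun i => V i = t), c i) ^ 2 := by
    rw [← Finset.sum_fiberwise_of_maps_to (g := V) (fun i _ => Finset.mem_image_of_mem V (Finset.mem_univ i))
        (fun i => ∑ j : Fin n, c i * c j * (if V i = V j then (1:ℝ) else 0))]
    refine Finset.sum_congr rfl fun t _ => ?_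
    rw [sq, Finset.sum_mul]
    refine Finset.sum_congr rfl fun i hi => ?_
    rw [Finset.mem_filter] at hi
    rw [Finset.mul_sum]
    rw [Finset.sum_filter]
    refine Finset.sum_congr rfl fun j _ => ?_
    by_cases h : V j = t
    · simp [h, hi.2]
    · have : ¬ V i = V j := by rw [hi.2]; exact fun hh => h hh.symm
      simp [h, this]
  rw [key]
  exact Finset.sum_nonneg fun t _ => sq_nonneg _

/-- **Collision probabilities are positive semidefinite kernels.** If `L` is a
random hash function and `k x y` is the probability that `x` and `y` collide
under `L`, then `k` is a positive semidefinite kernel. -/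
theorem collision_probability_posdef {Ω : Type*} [MeasurableSpace Ω]
    (P : Measure Ω) [IsProbabilityMeasure P]
    {S T : Type*} [DecidableEq T] (L : Ω → S → T)
    (hmeas : ∀ x y : S, MeasurableSet {ω | L ω x = L ω y})
    (k : S → S → ℝ)
    (hk : ∀ x y, k x y = (P {ω | L ω x = L ω y}).toReal) :
    ∀ (n : ℕ) (x : Fin n → S) (c : Fin n → ℝ),
      0 ≤ ∑ i : Fin n, ∑ j : Fin n, c i * c j * k (x i) (x j) := by
  intro n x c
  have hint : ∀ i j : Fin n, Integrable
      (fun ω => Set.indicator {ω | L ω (x i) = L ω (x j)} (fun _ => (1:ℝ)) ω) P := by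
    intro i j
    exact (integrable_const (1:ℝ)).indicator (hmeas (x i) (x j))
  have hterm : ∀ i j : Fin n, c i * c j * k (x i) (x j)
      = ∫ ω, c i * c j * Set.indicator {ω | L ω (x i) = L ω (x j)} (fun _ => (1:ℝ)) ω ∂P := by
    intro i j
    rw [integral_const_mul, hk]
    congr 1
    exact (integral_indicator_one (hmeas (x i) (x j))).symm
  calc (0:ℝ) ≤ ∫ ω, ∑ i : Fin n, ∑ j : Fin n,
        c i * c j * Set.indicator {ω | L ω (x i) = L ω (x j)} (fun _ => (1:ℝ)) ω ∂P := by
        refine integral_nonneg fun ω => ?_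
        have := gram_ind_nonneg (fun i => L ω (x i)) c
        show (0:ℝ) ≤ _
        convert this using 2 with i
        refine Finset.sum_congr rfl fun j _ => ?_
        congr 1
        by_cases h : L ω (x i) = L ω (x j) <;> simp [Set.indicator, h]
    _ = ∑ i : Fin n, ∑ j : Fin n, c i * c j * k (x i) (x j) := by
        rw [integral_finset_sum _ (fun i _ => integrable_finset_sum _
          (fun j _ => ((hint i j).const_mul _)))]
        refine Finset.sum_congr rfl fun i _ => ?_
        rw [integral_finset_sum _ (fun j _ => (hint i j).const_mul _)]
        exact Finset.sum_congr rfl fun j _ => (hterm i j).symm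
end
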